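/- Assume: (i) ‖φ‖ = 1; (ii) ⟨φ_γ, φ_δ⟩ ≥ 0 for all γ, δ ∈ 𝒯_d; (iii) all coefficients c_i and d_i are strictly positive; (iv) there exists η₀ ∈ G with ‖U(η₀)p − q‖ ≤ ‖U(η)p − q‖ for every η ∈ G, and moreover η₀ ∘ γ_i ∈ 𝒯_d and η₀⁻¹ ∘ δ_i ∈ 𝒯_d for all i; (v) ‖U(η₀)p − q‖ < ε · √(‖c‖₂² + ‖d‖₂²) for some ε > 0; (vi) for some α with 0 ≤ α < √2, every family (φ_{χ_1}, …, φ_{χ_{2K}}) with χ_1, …, χ_{2K} ∈ 𝒯_d is (ε, α)-robustly linearly independent; (vii) there is ρ ≥ 0 such that for every η ∈ G and every η' ∈ 𝒯_d with η' ∉ η ∘ S_φ, there exists π ∈ S_φ such that for all γ ∈ 𝒯_d, ‖U(η ∘ π ∘ η'⁻¹)φ_γ − φ_γ‖ ≤ ρ · ‖U(η)φ − U(η')φ‖ (the symmetry-aware transformation inconsistency of the dictionary is at most ρ). Then inf_{η ∈ 𝒯_a} ‖U(η)p − q‖ − ‖U(η₀)p − q‖ ≤ α ρ · min(‖c‖₁,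 ‖d‖₁), where ‖c‖₁ = Σ_{i=1}^K |c_i| and ‖c‖₂ is the Euclidean norm. -/

import Mathlib

/-!
The residual `U(η₀)p - q` is a combination of the `2K` atoms `φ_{η₀γ_j}` and `φ_{δ_i}` with
coefficients `c` and `-d`; it is small, so robust linear independence yields two atoms whose
normalised signed copies nearly cancel. Two atoms with coefficients of the same sign cannot do
this, since unit vectors with nonnegative inner product are at distance at least `√2` of each
other's negatives. Hence some `φ_{η₀γ_j}` lies within `α` of some `φ_{δ_i}`. If
`δ_i ∈ η₀γ_j S_φ` then `η₀` itself lies in `𝒯_a`. Otherwise the transformation inconsistency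
gives `π ∈ S_φ` such that `θ = η₀γ_jπδ_i⁻¹` moves every atom by at most `αρ`, and
`η = θ⁻¹η₀ ∈ 𝒯_a` satisfies `‖U(η)p - q‖ ≤ ‖U(η₀)p - q‖ + αρ‖c‖₁` (undo `θ` on `U(η₀)p`) as well
as `‖U(η)p - q‖ = ‖U(η₀)p - U(θ)q‖ ≤ ‖U(η₀)p - q‖ + αρ‖d‖₁` (apply `θ` to `q`).
-/

/-- A finite family of (nonzero) vectors is `(ε, α)`-robustly linearly independent. -/
def IsRLI {E : Type*} [NormedAddCommGroup E] [NormedSpace ℝ E] {n : ℕ}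
    (w : Fin n → E) (ε α : ℝ) : Prop :=
  ∀ a : Fin n → ℝ, ‖∑ i, a i • w i‖ < ε * Real.sqrt (∑ i, a i ^ 2) →
    ∃ i j, a i ≠ 0 ∧ a j ≠ 0 ∧
      ‖‖a i • w i‖⁻¹ • (a i • w i) + ‖a j • w j‖⁻¹ • (a j • w j)‖ ≤ α

section UnitVectors

variable {E : Type*} [NormedAddCommGroup E] [InnerProductSpace ℝ E]

lemma sqrt_two_le_norm_add_of_inner_nonneg {v w : E} (hv : ‖v‖ = 1) (hw : ‖w‖ = 1)
    (hvw : 0 ≤ inner ℝ v w) : √2 ≤ ‖v + w‖ := by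
  have hsq : ‖v + w‖ ^ 2 = ‖v‖ ^ 2 + 2 * inner ℝ v w + ‖w‖ ^ 2 := norm_add_sq_real v w
  nlinarith [Real.sq_sqrt (zero_le_two : (0 : ℝ) ≤ 2), Real.sqrt_nonneg 2, norm_nonneg (v + w)]

lemma inv_norm_smul_smul_of_pos {a : ℝ} (ha : 0 < a) {w : E} (hw : ‖w‖ = 1) :
    ‖a • w‖⁻¹ • (a • w) = w := by
  rw [norm_smul, hw, mul_one, smul_smul, Real.norm_eq_abs, abs_of_pos ha,
    inv_mul_cancel₀ ha.ne', one_smul]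

lemma inv_norm_smul_smul_of_neg {a : ℝ} (ha : a < 0) {w : E} (hw : ‖w‖ = 1) :
    ‖a • w‖⁻¹ • (a • w) = -w := by
  rw [norm_smul, hw, mul_one, smul_smul, Real.norm_eq_abs, abs_of_neg ha, ← neg_inv,
    neg_mul, inv_mul_cancel₀ ha.ne, neg_smul, one_smul]

theorem IsRLI.exists_pos_neg_norm_sub_le {n : ℕ} {w : Fin n → E} {ε α : ℝ}
    (hw : IsRLI w ε α) (hα : α < √2) (hunit : ∀ i, ‖w i‖ = 1)
    (hinner : ∀ i j, 0 ≤ inner ℝ (w i) (w j)) {a : Fin n → ℝ}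
    (ha : ‖∑ i, a i • w i‖ < ε * √(∑ i, a i ^ 2)) :
    ∃ i j, 0 < a i ∧ a j < 0 ∧ ‖w i - w j‖ ≤ α := by
  obtain ⟨i, j, hi, hj, hij⟩ := hw a ha
  rcases hi.lt_or_gt with hi | hi <;> rcases hj.lt_or_gt with hj | hj
  · rw [inv_norm_smul_smul_of_neg hi (hunit i), inv_norm_smul_smul_of_neg hj (hunit j),
      ← neg_add, norm_neg] at hij
    linarith [sqrt_two_le_norm_add_of_inner_nonneg (hunit i) (hunit j) (hinner i j)]
  · rw [inv_norm_smul_smul_of_neg hi (hunit i), inv_norm_smul_smul_of_pos hj (hunit j),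
      neg_add_eq_sub] at hij
    exact ⟨j, i, hj, hi, hij⟩
  · rw [inv_norm_smul_smul_of_pos hi (hunit i), inv_norm_smul_smul_of_neg hj (hunit j),
      ← sub_eq_add_neg] at hij
    exact ⟨i, j, hi, hj, hij⟩
  · rw [inv_norm_smul_smul_of_pos hi (hunit i), inv_norm_smul_smul_of_pos hj (hunit j)] at hij
    linarith [sqrt_two_le_norm_add_of_inner_nonneg (hunit i) (hunit j) (hinner i j)]

theorem IsRLI.exists_norm_sub_le_of_norm_sum_sub_sum_lt {ι κ : Type*} [Fintype ι] [Fintype κ]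
    {n : ℕ} (e : ι ⊕ κ ≃ Fin n) {w : ι ⊕ κ → E} {ε α : ℝ} (hw : IsRLI (w ∘ e.symm) ε α)
    (hα : α < √2) (hunit : ∀ s, ‖w s‖ = 1) (hinner : ∀ s t, 0 ≤ inner ℝ (w s) (w t))
    {c : ι → ℝ} {d : κ → ℝ} (hc : ∀ i, 0 < c i) (hd : ∀ k, 0 < d k)
    (hsmall : ‖∑ i, c i • w (.inl i) - ∑ k, d k • w (.inr k)‖
      < ε * √(∑ i, c i ^ 2 + ∑ k, d k ^ 2)) :
    ∃ i k, ‖w (.inl i) - w (.inr k)‖ ≤ α := by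
  set a : ι ⊕ κ → ℝ := Sum.elim c (-d)
  have hsum : ∑ i, (a ∘ e.symm) i • (w ∘ e.symm) i
      = ∑ i, c i • w (.inl i) - ∑ k, d k • w (.inr k) := by
    simp only [Function.comp_apply]
    rw [Equiv.sum_comp e.symm (fun s => a s • w s), Fintype.sum_sum_type]
    simp [a, sub_eq_add_neg]
  have hsq : ∑ i, (a ∘ e.symm) i ^ 2 = ∑ i, c i ^ 2 + ∑ k, d k ^ 2 := by
    simp only [Function.comp_apply]
    rw [Equiv.sum_comp e.symm (fun s => a s ^ 2), Fintype.sum_sum_type]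
    simp [a]
  obtain ⟨i, j, hi, hj, hij⟩ := hw.exists_pos_neg_norm_sub_le hα (fun _ => hunit _)
    (fun _ _ => hinner _ _) (a := a ∘ e.symm) (by rwa [hsum, hsq])
  obtain ⟨s, rfl⟩ := e.surjective i
  obtain ⟨t, rfl⟩ := e.surjective j
  simp only [Function.comp_apply, Equiv.symm_apply_apply] at hi hj hij
  rcases s with i | i <;> rcases t with k | k
  · exact absurd hj (hc k).not_gt
  · exact ⟨i, k, hij⟩
  · exact absurd hi (neg_neg_of_pos (hd i)).not_gt
  · exact absurd hi (neg_neg_of_pos (hd i)).not_gt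

end UnitVectors

section MovedAtoms

variable {E : Type*} [NormedAddCommGroup E] [NormedSpace ℝ E] {ι κ : Type*} [Fintype ι]
  [Fintype κ]

lemma norm_map_sum_smul_sub_le {F : Type*} [FunLike F E E] [LinearMapClass F ℝ E E] (T : F)
    (x : ι → E) (c : ι → ℝ) {r : ℝ} (hx : ∀ k, ‖T (x k) - x k‖ ≤ r) :
    ‖T (∑ k, c k • x k) - ∑ k, c k • x k‖ ≤ r * ∑ k, |c k| := by
  simp only [map_sum, map_smul, ← Finset.sum_sub_distrib, ← smul_sub, Finset.mul_sum]
  refine (norm_sum_le _ _).trans (Finset.sum_le_sum fun k _ => ?_)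
  rw [norm_smul, Real.norm_eq_abs, mul_comm r]
  exact mul_le_mul_of_nonneg_left (hx k) (abs_nonneg _)

/-- An isometry moving every atom of `P = ∑ cₖ xₖ` and of `Q = ∑ dₖ yₖ` by at most `r` can be
undone on `P` at cost `r‖c‖₁`, or applied to `Q` at cost `r‖d‖₁`. -/
lemma norm_symm_sum_smul_sub_sum_smul_le (T : E ≃ₗᵢ[ℝ] E) (x : ι → E) (y : κ → E)
    (c : ι → ℝ) (d : κ → ℝ) {r : ℝ} (hx : ∀ k, ‖T (x k) - x k‖ ≤ r)
    (hy : ∀ k, ‖T (y k) - y k‖ ≤ r) :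
    ‖T.symm (∑ k, c k • x k) - ∑ k, d k • y k‖
      ≤ ‖∑ k, c k • x k - ∑ k, d k • y k‖ + r * min (∑ k, |c k|) (∑ k, |d k|) := by
  set P := ∑ k, c k • x k
  set Q := ∑ k, d k • y k
  have hP : ‖T.symm P - Q‖ ≤ ‖P - Q‖ + r * ∑ k, |c k| := calc
    ‖T.symm P - Q‖ ≤ ‖T.symm P - P‖ + ‖P - Q‖ := norm_sub_le_norm_sub_add_norm_sub _ _ _
    _ = ‖T P - P‖ + ‖P - Q‖ := by
      rw [← T.norm_map, map_sub, T.apply_symm_apply, norm_sub_rev]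
    _ ≤ ‖P - Q‖ + r * ∑ k, |c k| := by
      linarith [norm_map_sum_smul_sub_le T x c hx]
  have hQ : ‖T.symm P - Q‖ ≤ ‖P - Q‖ + r * ∑ k, |d k| := calc
    ‖T.symm P - Q‖ = ‖P - T Q‖ := by rw [← T.norm_map, map_sub, T.apply_symm_apply]
    _ ≤ ‖P - Q‖ + ‖Q - T Q‖ := norm_sub_le_norm_sub_add_norm_sub _ _ _
    _ ≤ ‖P - Q‖ + r * ∑ k, |d k| := by
      linarith [norm_sub_rev Q (T Q), norm_map_sum_smul_sub_le T y d hy]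
  rcases min_choice (∑ k, |c k|) (∑ k, |d k|) with h | h <;> rw [h] <;> assumption

end MovedAtoms

section Registration

variable {H G : Type*} [NormedAddCommGroup H] [NormedSpace ℝ H] [Group G]
  (U : G →* (H ≃ₗᵢ[ℝ] H)) {φ : H}

lemma apply_inv_eq_self_of_apply_eq_self {π : G} (hπ : U π φ = φ) : U π⁻¹ φ = φ := by
  rw [map_inv, LinearIsometryEquiv.coe_inv, LinearIsometryEquiv.symm_apply_eq, hπ]

theorem exists_stabilizer_norm_apply_sub_le {ι κ : Type*} [Fintype ι] [Fintype κ] {Td : Set G}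
    {ρ r : ℝ} (hρ : 0 ≤ ρ) (hr : 0 ≤ r)
    (hinc : ∀ η : G, ∀ η' ∈ Td, (¬ ∃ π : G, U π φ = φ ∧ η' = η * π) →
      ∃ π : G, U π φ = φ ∧ ∀ γ' ∈ Td,
        ‖U (η * π * η'⁻¹) (U γ' φ) - U γ' φ‖ ≤ ρ * ‖U η φ - U η' φ‖)
    {γ : ι → G} {δ : κ → G} (hγ : ∀ k, γ k ∈ Td) (hδ : ∀ k, δ k ∈ Td) (c : ι → ℝ) (d : κ → ℝ)
    {j : ι} {i : κ} (hji : ‖U (γ j) φ - U (δ i) φ‖ ≤ r) :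
    ∃ π, U π φ = φ ∧
      ‖U (δ i * π * (γ j)⁻¹) (∑ k, c k • U (γ k) φ) - ∑ k, d k • U (δ k) φ‖
        ≤ ‖∑ k, c k • U (γ k) φ - ∑ k, d k • U (δ k) φ‖
          + r * ρ * min (∑ k, |c k|) (∑ k, |d k|) := by
  by_cases hS : ∃ π, U π φ = φ ∧ δ i = γ j * π
  · obtain ⟨π, hπ, hδi⟩ := hS
    refine ⟨π⁻¹, apply_inv_eq_self_of_apply_eq_self U hπ, ?_⟩
    rw [hδi, show γ j * π * π⁻¹ * (γ j)⁻¹ = 1 by group, map_one, LinearIsometryEquiv.coe_one,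
      id]
    have : 0 ≤ r * ρ * min (∑ k, |c k|) (∑ k, |d k|) := by positivity
    linarith
  obtain ⟨π, hπ, hmove⟩ := hinc _ _ (hδ i) hS
  refine ⟨π⁻¹, apply_inv_eq_self_of_apply_eq_self U hπ, ?_⟩
  have hθ : ∀ γ' ∈ Td, ‖U (γ j * π * (δ i)⁻¹) (U γ' φ) - U γ' φ‖ ≤ r * ρ := fun γ' hγ' =>
    (hmove γ' hγ').trans (by rw [mul_comm r]; exact mul_le_mul_of_nonneg_left hji hρ)
  rw [show δ i * π⁻¹ * (γ j)⁻¹ = (γ j * π * (δ i)⁻¹)⁻¹ by group, map_inv,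
    LinearIsometryEquiv.coe_inv]
  exact norm_symm_sum_smul_sub_sum_smul_le _ _ _ c d (fun k => hθ _ (hγ k))
    (fun k => hθ _ (hδ k))

end Registration

theorem stmt14_general {H G : Type*} [NormedAddCommGroup H] [InnerProductSpace ℝ H]
    [Group G] (U : G →* (H ≃ₗᵢ[ℝ] H)) (φ : H) (Td : Set G)
    (hφ : ‖φ‖ = 1)
    (hpos : ∀ γ ∈ Td, ∀ δ ∈ Td, 0 ≤ (inner ℝ (U γ φ) (U δ φ) : ℝ))
    (K : ℕ)
    (γ δ : Fin K → G) (hδTd : ∀ i, δ i ∈ Td)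
    (c d : Fin K → ℝ) (hc : ∀ i, 0 < c i) (hd : ∀ i, 0 < d i)
    (p q : H) (hp : p = ∑ i, c i • U (γ i) φ) (hq : q = ∑ i, d i • U (δ i) φ)
    (η₀ : G)
    (hη₀γ : ∀ i, η₀ * γ i ∈ Td)
    (ε : ℝ)
    (hsmall : ‖U η₀ p - q‖ < ε * Real.sqrt (∑ i, c i ^ 2 + ∑ i, d i ^ 2))
    (α : ℝ) (hα0 : 0 ≤ α) (hα : α < Real.sqrt 2)
    (hRLI : ∀ χ : Fin (2 * K) → G, (∀ i, χ i ∈ Td) →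
      IsRLI (fun i => U (χ i) φ) ε α)
    (ρ : ℝ) (hρ0 : 0 ≤ ρ)
    (hinc : ∀ η : G, ∀ η' ∈ Td, (¬ ∃ π : G, U π φ = φ ∧ η' = η * π) →
      ∃ π : G, U π φ = φ ∧ ∀ γ' ∈ Td,
        ‖U (η * π * η'⁻¹) (U γ' φ) - U γ' φ‖ ≤ ρ * ‖U η φ - U η' φ‖) :
    sInf ((fun η => ‖U η p - q‖) ''
        {η : G | ∃ i j : Fin K, ∃ π : G, U π φ = φ ∧ η = δ i * π * (γ j)⁻¹})
      - ‖U η₀ p - q‖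
      ≤ α * ρ * min (∑ i, |c i|) (∑ i, |d i|) := by
  have hUp : U η₀ p = ∑ k, c k • U (η₀ * γ k) φ := by simp [hp]
  set χ : Fin K ⊕ Fin K → G := Sum.elim (η₀ * γ ·) δ
  have hχTd : ∀ s, χ s ∈ Td := Sum.forall.2 ⟨hη₀γ, hδTd⟩
  obtain ⟨j, i, hji⟩ : ∃ j i, ‖U (η₀ * γ j) φ - U (δ i) φ‖ ≤ α :=
    (hRLI _ fun _ => hχTd _).exists_norm_sub_le_of_norm_sum_sub_sum_lt
      (finSumFinEquiv.trans (finCongr (two_mul K).symm)) (w := fun s => U (χ s) φ) hα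
      (fun s => by simp [hφ]) (fun s t => hpos _ (hχTd s) _ (hχTd t)) hc hd
      (by simpa only [χ, Sum.elim_inl, Sum.elim_inr, hUp, hq] using hsmall)
  obtain ⟨π, hπ, hle⟩ := exists_stabilizer_norm_apply_sub_le U hρ0 hα0 hinc hη₀γ hδTd c d hji
  have hshift : U (δ i * π * (η₀ * γ j)⁻¹) (U η₀ p) = U (δ i * π * (γ j)⁻¹) p := by
    rw [show δ i * π * (γ j)⁻¹ = δ i * π * (η₀ * γ j)⁻¹ * η₀ by group,
      map_mul U _ η₀]
    rfl
  rw [← hUp, ← hq, hshift] at hle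
  have hbdd : BddBelow ((fun η => ‖U η p - q‖) ''
      {η : G | ∃ i j : Fin K, ∃ π : G, U π φ = φ ∧ η = δ i * π * (γ j)⁻¹}) :=
    ⟨0, by rintro _ ⟨_, -, rfl⟩; exact norm_nonneg _⟩
  linarith [csInf_le hbdd ⟨_, ⟨i, j, π, hπ, rfl⟩, rfl⟩]

/-- registration error bound for the modified algorithm in the
presence of symmetries of the generating function (nontrivial stabilizer
`S_φ = {π : U(π)φ = φ}`), with the symmetry-aware transformation inconsistency. -/
theorem stmt14 {H G : Type*} [NormedAddCommGroup H] [InnerProductSpace ℝ H]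
    [Group G] (U : G →* (H ≃ₗᵢ[ℝ] H)) (φ : H) (Td : Set G)
    (hφ : ‖φ‖ = 1)
    (hpos : ∀ γ ∈ Td, ∀ δ ∈ Td, 0 ≤ (inner ℝ (U γ φ) (U δ φ) : ℝ))
    (K : ℕ) (hK : 1 ≤ K)
    (γ δ : Fin K → G) (hγTd : ∀ i, γ i ∈ Td) (hδTd : ∀ i, δ i ∈ Td)
    (c d : Fin K → ℝ) (hc : ∀ i, 0 < c i) (hd : ∀ i, 0 < d i)
    (p q : H) (hp : p = ∑ i, c i • U (γ i) φ) (hq : q = ∑ i, d i • U (δ i) φ)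
    (η₀ : G) (hopt : ∀ η : G, ‖U η₀ p - q‖ ≤ ‖U η p - q‖)
    (hη₀γ : ∀ i, η₀ * γ i ∈ Td) (hη₀δ : ∀ i, η₀⁻¹ * δ i ∈ Td)
    (ε : ℝ) (hε : 0 < ε)
    (hsmall : ‖U η₀ p - q‖ < ε * Real.sqrt (∑ i, c i ^ 2 + ∑ i, d i ^ 2))
    (α : ℝ) (hα0 : 0 ≤ α) (hα : α < Real.sqrt 2)
    (hRLI : ∀ χ : Fin (2 * K) → G, (∀ i, χ i ∈ Td) →
      IsRLI (fun i => U (χ i) φ) ε α)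
    (ρ : ℝ) (hρ0 : 0 ≤ ρ)
    (hinc : ∀ η : G, ∀ η' ∈ Td, (¬ ∃ π : G, U π φ = φ ∧ η' = η * π) →
      ∃ π : G, U π φ = φ ∧ ∀ γ' ∈ Td,
        ‖U (η * π * η'⁻¹) (U γ' φ) - U γ' φ‖ ≤ ρ * ‖U η φ - U η' φ‖) :
    sInf ((fun η => ‖U η p - q‖) ''
        {η : G | ∃ i j : Fin K, ∃ π : G, U π φ = φ ∧ η = δ i * π * (γ j)⁻¹})
      - ‖U η₀ p - q‖
      ≤ α * ρ * min (∑ i, |c i|) (∑ i, |d i|) :=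
  stmt14_general U φ Td hφ hpos K γ δ hδTd c d hc hd p q hp hq η₀ hη₀γ ε hsmall α hα0 hα hRLI ρ hρ0
    hinc
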